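/- arXiv:math/0509644 — 6 statements merged into one kernel-verified Lean document; each statement's English description precedes it below -/
import Mathlib

section
/- Let (X, d) be a metric space and let 𝒰 be a locally finite open cover of X of multiplicity ≤ m such that every member U ∈ 𝒰 has nonempty complement and satisfies L(𝒰)|_U > 0, and set λ_U = L(𝒰)|_U / (2m+1)². Then for every U ∈ 𝒰, every x ∈ U, and every y ∈ X, the partition-of-unity functions φ_V(z) = d(z, X∖V) / Σ_{W∈𝒰} d(z, X∖W) satisfy |φ_U(x) − φ_U(y)| ≤ d(x, y) / (√(2m+1) · λ_U). -/
open Metric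

/-- pointwise Lipschitz-type estimate for the partition-of-unity functions
associated to a locally finite open cover of multiplicity `≤ m`. -/
theorem stmt2 (X : Type*) [MetricSpace X] (𝒰 : Set (Set X)) (m : ℕ)
    (hopen : ∀ U ∈ 𝒰, IsOpen U)
    (hcover : ∀ x : X, ∃ U ∈ 𝒰, x ∈ U)
    (hlf : LocallyFinite (fun U : 𝒰 => (U : Set X)))
    (hmult : ∀ x : X, {U : Set X | U ∈ 𝒰 ∧ x ∈ U}.Finite ∧
      Nat.card {U : Set X | U ∈ 𝒰 ∧ x ∈ U} ≤ m)
    (hcompl : ∀ U ∈ 𝒰, ((U : Set X)ᶜ).Nonempty)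
    (hLeb : ∀ U ∈ 𝒰,
      0 < ⨅ y : (U : Set X), ⨆ V : 𝒰, infDist (y : X) ((V : Set X)ᶜ)) :
    ∀ U ∈ 𝒰, ∀ x ∈ U, ∀ y : X,
      |infDist x Uᶜ / (∑' W : 𝒰, infDist x ((W : Set X)ᶜ)) -
          infDist y Uᶜ / (∑' W : 𝒰, infDist y ((W : Set X)ᶜ))| ≤
        dist x y / (Real.sqrt (2 * (m : ℝ) + 1) *
          ((⨅ z : (U : Set X), ⨆ V : 𝒰, infDist (z : X) ((V : Set X)ᶜ)) /
            (2 * (m : ℝ) + 1) ^ 2)) := by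
  intro U hU x hxU y
  obtain ⟨U₀, hU₀, hxU₀⟩ := hcover x
  haveI : Nonempty 𝒰 := ⟨⟨U₀, hU₀⟩⟩
  set L := ⨅ z : (U : Set X), ⨆ V : 𝒰, infDist (z : X) ((V : Set X)ᶜ) with hLdef
  have hLpos : 0 < L := hLeb U hU
  -- finiteness of supports
  have hfin : ∀ z : X, {W : 𝒰 | z ∈ (W : Set X)}.Finite := by
    intro z
    have h := (hmult z).1
    have he : {W : 𝒰 | z ∈ (W : Set X)} = Subtype.val ⁻¹' {V : Set X | V ∈ 𝒰 ∧ z ∈ V} := by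
      ext W; simp [W.2]
    rw [he]
    exact h.preimage Subtype.val_injective.injOn
  have hzero : ∀ (z : X) (W : 𝒰), z ∉ (W : Set X) → infDist z ((W : Set X)ᶜ) = 0 :=
    fun z W hz => infDist_zero_of_mem hz
  have hsum : ∀ z : X, Summable (fun W : 𝒰 => infDist z ((W : Set X)ᶜ)) := by
    intro z
    refine summable_of_ne_finset_zero (s := (hfin z).toFinset) ?_
    intro W hW
    exact hzero z W (by simpa using hW)
  -- cardinality bound
  have hcard : ∀ z : X, Nat.card {W : 𝒰 | z ∈ (W : Set X)} ≤ m := by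
    intro z
    have h1 : Nat.card {W : 𝒰 | z ∈ (W : Set X)} ≤ Nat.card {V : Set X | V ∈ 𝒰 ∧ z ∈ V} := by
      haveI : Finite {V : Set X | V ∈ 𝒰 ∧ z ∈ V} := (hmult z).1.to_subtype
      exact Nat.card_le_card_of_injective
        (fun W => ⟨W.1.1, W.1.2, W.2⟩)
        (fun W₁ W₂ h => by
          simpa [Subtype.ext_iff, Subtype.mk.injEq] using h)
    exact h1.trans (hmult z).2
  -- positivity of the sums
  have hSpos : ∀ z : X, 0 < ∑' W : 𝒰, infDist z ((W : Set X)ᶜ) := by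
    intro z
    obtain ⟨V, hV, hzV⟩ := hcover z
    have hpos : 0 < infDist z ((V : Set X)ᶜ) := by
      rcases lt_or_eq_of_le (infDist_nonneg (s := (V : Set X)ᶜ) (x := z)) with h | h
      · exact h
      · exfalso
        have hcz : z ∈ closure ((V : Set X)ᶜ) :=
          (mem_closure_iff_infDist_zero (hcompl V hV)).2 h.symm
        rw [(hopen V hV).isClosed_compl.closure_eq] at hcz
        exact hcz hzV
    exact hpos.trans_le (Summable.le_tsum (hsum z) ⟨V, hV⟩ fun _ _ => infDist_nonneg)
  set Sx := ∑' W : 𝒰, infDist x ((W : Set X)ᶜ) with hSxdef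
  set Sy := ∑' W : 𝒰, infDist y ((W : Set X)ᶜ) with hSydef
  have hSx0 : 0 < Sx := hSpos x
  have hSy0 : 0 < Sy := hSpos y
  -- L ≤ Sx
  have hLSx : L ≤ Sx := by
    have h1 : (⨆ V : 𝒰, infDist x ((V : Set X)ᶜ)) ≤ Sx :=
      ciSup_le fun V => Summable.le_tsum (hsum x) V fun _ _ => infDist_nonneg
    have h2 : L ≤ ⨆ V : 𝒰, infDist x ((V : Set X)ᶜ) := by
      refine ciInf_le ⟨0, ?_⟩ (⟨x, hxU⟩ : (U : Set X))
      rintro r ⟨z, rfl⟩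
      exact Real.iSup_nonneg fun V => infDist_nonneg
    exact h2.trans h1
  -- 1-Lipschitz of infDist
  have hlipD : ∀ s : Set X, |infDist x s - infDist y s| ≤ dist x y := by
    intro s
    rw [abs_sub_le_iff]
    constructor
    · have := infDist_le_infDist_add_dist (x := x) (y := y) (s := s)
      linarith
    · have := infDist_le_infDist_add_dist (x := y) (y := x) (s := s)
      rw [dist_comm y x] at this
      linarith
  -- difference of sums
  have hTfin : ({W : 𝒰 | x ∈ (W : Set X)} ∪ {W : 𝒰 | y ∈ (W : Set X)}).Finite :=
    (hfin x).union (hfin y)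
  have hSxeq : Sx = ∑ W ∈ hTfin.toFinset, infDist x ((W : Set X)ᶜ) := by
    refine tsum_eq_sum ?_
    intro W hW
    refine hzero x W fun hx' => hW ?_
    rw [Set.Finite.mem_toFinset]
    exact Or.inl hx'
  have hSyeq : Sy = ∑ W ∈ hTfin.toFinset, infDist y ((W : Set X)ᶜ) := by
    refine tsum_eq_sum ?_
    intro W hW
    refine hzero y W fun hy' => hW ?_
    rw [Set.Finite.mem_toFinset]
    exact Or.inr hy'
  have hTcard : (hTfin.toFinset.card : ℝ) ≤ 2 * m := by
    have h1 : hTfin.toFinset.card = ({W : 𝒰 | x ∈ (W : Set X)} ∪ {W : 𝒰 | y ∈ (W : Set X)}).ncard :=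
      (Set.ncard_eq_toFinset_card _ hTfin).symm
    have h2 : ({W : 𝒰 | x ∈ (W : Set X)} ∪ {W : 𝒰 | y ∈ (W : Set X)}).ncard ≤ m + m := by
      rw [← Nat.card_coe_set_eq]
      exact (Set.card_union_le _ _).trans
        (by
          rw [Nat.card_coe_set_eq, Nat.card_coe_set_eq] at *
          have := hcard x
          have := hcard y
          rw [Nat.card_coe_set_eq] at *
          omega)
    have := h1 ▸ h2
    push_cast
    exact_mod_cast by linarith [this]
  have hSdiff : |Sx - Sy| ≤ 2 * m * dist x y := by
    rw [hSxeq, hSyeq, ← Finset.sum_sub_distrib]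
    calc |∑ W ∈ hTfin.toFinset, (infDist x ((W : Set X)ᶜ) - infDist y ((W : Set X)ᶜ))|
        ≤ ∑ W ∈ hTfin.toFinset, |infDist x ((W : Set X)ᶜ) - infDist y ((W : Set X)ᶜ)| :=
          Finset.abs_sum_le_sum_abs _ _
      _ ≤ ∑ _W ∈ hTfin.toFinset, dist x y := Finset.sum_le_sum fun W _ => hlipD _
      _ = hTfin.toFinset.card * dist x y := by rw [Finset.sum_const, nsmul_eq_mul]
      _ ≤ 2 * m * dist x y := mul_le_mul_of_nonneg_right hTcard dist_nonneg
  -- pieces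
  set a := infDist x Uᶜ with hadef
  set b := infDist y Uᶜ with hbdef
  have haSx : a ≤ Sx := Summable.le_tsum (hsum x) ⟨U, hU⟩ fun _ _ => infDist_nonneg
  have hbSy : b ≤ Sy := Summable.le_tsum (hsum y) ⟨U, hU⟩ fun _ _ => infDist_nonneg
  have ha0 : 0 ≤ a := infDist_nonneg
  have hb0 : 0 ≤ b := infDist_nonneg
  have hab : |a - b| ≤ dist x y := hlipD Uᶜ
  set D := dist x y with hDdef
  have hD0 : 0 ≤ D := dist_nonneg
  -- main estimate
  have key : |a / Sx - b / Sy| ≤ (2 * m + 1) * D / Sx := by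
    have heq : a / Sx - b / Sy = ((a - b) + (b / Sy) * (Sy - Sx)) / Sx := by
      field_simp
      ring
    rw [heq, abs_div, abs_of_pos hSx0, div_le_div_iff_of_pos_right hSx0]
    · calc |(a - b) + (b / Sy) * (Sy - Sx)|
          ≤ |a - b| + |(b / Sy) * (Sy - Sx)| := abs_add_le _ _
        _ = |a - b| + (b / Sy) * |Sy - Sx| := by
            rw [abs_mul, abs_of_nonneg (div_nonneg hb0 hSy0.le)]
        _ ≤ D + 1 * (2 * m * D) := by
            have h1 : b / Sy ≤ 1 := (div_le_one hSy0).2 hbSy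
            have h2 : |Sy - Sx| ≤ 2 * m * D := by rw [abs_sub_comm]; exact hSdiff
            have h3 : (b / Sy) * |Sy - Sx| ≤ 1 * (2 * m * D) :=
              mul_le_mul h1 h2 (abs_nonneg _) one_pos.le
            linarith
        _ = (2 * m + 1) * D := by ring
  have key2 : (2 * (m : ℝ) + 1) * D / Sx ≤ (2 * m + 1) * D / L :=
    div_le_div_of_nonneg_left (by positivity) hLpos hLSx
  have key3 : (2 * (m : ℝ) + 1) * D / L ≤ D / (Real.sqrt (2 * m + 1) * (L / (2 * m + 1) ^ 2)) := by
    set s := Real.sqrt (2 * (m : ℝ) + 1) with hsdef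
    have hs2 : s ^ 2 = 2 * m + 1 := Real.sq_sqrt (by positivity)
    have hs0 : 0 < s := Real.sqrt_pos.2 (by positivity)
    have hm : (0 : ℝ) ≤ (m : ℝ) := Nat.cast_nonneg m
    have hs1 : 1 ≤ s := by nlinarith [hs2, hs0]
    have hsle : s ≤ 2 * m + 1 := by nlinarith
    have hden : 0 < s * (L / (2 * (m : ℝ) + 1) ^ 2) := by positivity
    rw [div_le_div_iff₀ hLpos hden]
    have hm0 : (0 : ℝ) < 2 * m + 1 := by positivity
    rw [div_eq_mul_inv L]
    have hexp : (2 * (m : ℝ) + 1) * D * (s * (L * ((2 * (m : ℝ) + 1) ^ 2)⁻¹)) ≤ D * L := by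
      rw [mul_comm D L]
      have hkey : (2 * (m : ℝ) + 1) * s * ((2 * (m : ℝ) + 1) ^ 2)⁻¹ ≤ 1 := by
        rw [← div_eq_mul_inv, div_le_one (by positivity)]
        nlinarith
      calc (2 * (m : ℝ) + 1) * D * (s * (L * ((2 * (m : ℝ) + 1) ^ 2)⁻¹))
          = (L * D) * ((2 * (m : ℝ) + 1) * s * ((2 * (m : ℝ) + 1) ^ 2)⁻¹) := by ring
        _ ≤ (L * D) * 1 := by
            apply mul_le_mul_of_nonneg_left hkey (by positivity)
        _ = L * D := by ring
    exact hexp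
  calc |a / Sx - b / Sy| ≤ (2 * m + 1) * D / Sx := key
    _ ≤ (2 * m + 1) * D / L := key2
    _ ≤ D / (Real.sqrt (2 * m + 1) * (L / (2 * m + 1) ^ 2)) := key3
end

section
/- Let (X, d) be a metric space and let 𝒰 be a locally finite open cover of X of multiplicity ≤ m such that every member U ∈ 𝒰 has nonempty complement and satisfies L(𝒰)|_U > 0, and set λ_U = L(𝒰)|_U / (2m+1)². Define p : X → ℓ²(𝒰) by p(x)_U = λ_U · φ_U(x), where φ_U(x) = d(x, X∖U) / Σ_{V∈𝒰} d(x, X∖V). Then p(x) lies in ℓ²(𝒰) for every x, and p is 1-Lipschitz: ‖p(x) − p(y)‖_{ℓ²} ≤ d(x, y) for all x, y ∈ X. -/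
/-! At most `m` of the `1`-Lipschitz functions `d(·, Uᶜ)` are nonzero at a point, so their sum
`S` is `2m`-Lipschitz. For `x ∈ U` this bounds the change of `d(·, Uᶜ) / S` between `x` and `y` by
`(2m + 1) d(x, y) / S x`, and `L(𝒰)|_U ≤ sup_V d(x, Vᶜ) ≤ S x` turns the change of the coordinate
`λ_U d(·, Uᶜ) / S` into at most `d(x, y) / (2m + 1)`. As `p x - p y` has at most `2m` nonzero
coordinates, its norm is at most `√(2m) d(x, y) / (2m + 1) ≤ d(x, y)`. -/

open Metric

theorem lp.norm_two_le_sqrt_card_mul {ι : Type*} {v : lp (fun _ : ι => ℝ) 2} {s : Finset ι}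
    (hs : ∀ i ∉ s, v i = 0) {C : ℝ} (hC : 0 ≤ C) (hv : ∀ i, |v i| ≤ C) :
    ‖v‖ ≤ √s.card * C := by
  have htwo : (2 : ENNReal).toReal = 2 := by norm_num
  refine lp.norm_le_of_tsum_le (by norm_num) (by positivity) ?_
  rw [tsum_eq_sum fun i hi => by simp [hs i hi]]
  simp only [htwo, Real.rpow_two, Real.norm_eq_abs, sq_abs, mul_pow,
    Real.sq_sqrt (Nat.cast_nonneg _)]
  calc ∑ i ∈ s, v i ^ 2 ≤ ∑ _i ∈ s, C ^ 2 :=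
        Finset.sum_le_sum fun i _ => sq_le_sq.mpr ((hv i).trans (le_abs_self C))
    _ = s.card * C ^ 2 := by rw [Finset.sum_const, nsmul_eq_mul]

section NormalizedFamily

variable {X ι : Type*} [PseudoMetricSpace X] {f : ι → X → ℝ}

theorem abs_mul_div_sub_mul_div_le {l a b s t : ℝ} (hl : 0 ≤ l) (hs : 0 < s) (ht : 0 < t)
    (hb : 0 ≤ b) (hbt : b ≤ t) :
    |l * (a / s) - l * (b / t)| ≤ l / s * (|a - b| + |s - t|) := by
  have hsplit : l * (a / s) - l * (b / t) = l / s * (a - b + b / t * (t - s)) := by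
    field_simp
    ring
  rw [hsplit, abs_mul, abs_of_nonneg (div_nonneg hl hs.le)]
  gcongr
  calc |a - b + b / t * (t - s)| ≤ |a - b| + |b / t * (t - s)| := abs_add_le _ _
    _ ≤ |a - b| + |s - t| := by
      rw [abs_mul, abs_of_nonneg (div_nonneg hb ht.le), abs_sub_comm t s]
      gcongr
      exact mul_le_of_le_one_left (abs_nonneg _) (div_le_one_of_le₀ hbt ht.le)

theorem le_sum_of_forall_notMem_eq_zero {g : ι → ℝ} (hg : ∀ i, 0 ≤ g i) {s : Finset ι}
    (hs : ∀ i ∉ s, g i = 0) (i : ι) : g i ≤ ∑ j ∈ s, g j := by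
  by_cases hi : i ∈ s
  · exact Finset.single_le_sum (fun j _ => hg j) hi
  · rw [hs i hi]
    exact Finset.sum_nonneg fun j _ => hg j

theorem abs_sum_sub_sum_le_card_mul_dist (hf : ∀ i, LipschitzWith 1 (f i)) (s : Finset ι)
    (x y : X) : |∑ i ∈ s, f i x - ∑ i ∈ s, f i y| ≤ s.card * dist x y := by
  rw [← Finset.sum_sub_distrib]
  calc |∑ i ∈ s, (f i x - f i y)| ≤ ∑ i ∈ s, |f i x - f i y| := Finset.abs_sum_le_sum_abs _ _
    _ ≤ ∑ _i ∈ s, dist x y := Finset.sum_le_sum fun i _ => by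
        simpa [Real.dist_eq] using (hf i).dist_le_mul x y
    _ = s.card * dist x y := by rw [Finset.sum_const, nsmul_eq_mul]

theorem abs_weighted_ratio_sub_le {m : ℕ} (hf : ∀ i, LipschitzWith 1 (f i))
    (hf_nonneg : ∀ i x, 0 ≤ f i x) {s : Finset ι} (hs : s.card ≤ 2 * m) {x y : X}
    (hx : ∀ j ∉ s, f j x = 0) (hy : ∀ j ∉ s, f j y = 0) (hSx : 0 < ∑' j, f j x)
    (hSy : 0 < ∑' j, f j y) {w : ℝ} (hw : 0 ≤ w) (hwx : (2 * m + 1) ^ 2 * w ≤ ∑' j, f j x)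
    (i : ι) :
    |w * (f i x / ∑' j, f j x) - w * (f i y / ∑' j, f j y)| ≤ dist x y / (2 * m + 1) := by
  have hsum_x : ∑' j, f j x = ∑ j ∈ s, f j x := tsum_eq_sum hx
  have hsum_y : ∑' j, f j y = ∑ j ∈ s, f j y := tsum_eq_sum hy
  rw [hsum_x] at hSx hwx ⊢
  rw [hsum_y] at hSy ⊢
  have hcard : (s.card : ℝ) + 1 ≤ 2 * m + 1 := by exact_mod_cast Nat.add_le_add_right hs 1
  have hwS : w / ∑ j ∈ s, f j x ≤ 1 / (2 * m + 1) ^ 2 := by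
    rw [div_le_div_iff₀ hSx (by positivity)]
    linarith
  calc _ ≤ w / (∑ j ∈ s, f j x) * (|f i x - f i y| + |∑ j ∈ s, f j x - ∑ j ∈ s, f j y|) :=
        abs_mul_div_sub_mul_div_le hw hSx hSy (hf_nonneg i y)
          (le_sum_of_forall_notMem_eq_zero (hf_nonneg · y) hy i)
    _ ≤ 1 / (2 * m + 1) ^ 2 * ((2 * m + 1) * dist x y) := by
        gcongr
        calc _ ≤ dist x y + s.card * dist x y := by
              gcongr
              · simpa [Real.dist_eq] using (hf i).dist_le_mul x y
              · exact abs_sum_sub_sum_le_card_mul_dist hf s x y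
          _ ≤ (2 * m + 1) * dist x y := by nlinarith [dist_nonneg (x := x) (y := y)]
    _ = dist x y / (2 * m + 1) := by field_simp

theorem abs_weighted_ratio_sub_le_of_union {m : ℕ} (hf : ∀ i, LipschitzWith 1 (f i))
    (hf_nonneg : ∀ i x, 0 ≤ f i x) {s : Finset ι} (hs : s.card ≤ 2 * m) {x y : X}
    (hx : ∀ j ∉ s, f j x = 0) (hy : ∀ j ∉ s, f j y = 0) (hSx : 0 < ∑' j, f j x)
    (hSy : 0 < ∑' j, f j y) {w : ℝ} (hw : 0 ≤ w) (i : ι)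
    (hwx : f i x ≠ 0 → (2 * m + 1) ^ 2 * w ≤ ∑' j, f j x)
    (hwy : f i y ≠ 0 → (2 * m + 1) ^ 2 * w ≤ ∑' j, f j y) :
    |w * (f i x / ∑' j, f j x) - w * (f i y / ∑' j, f j y)| ≤ dist x y / (2 * m + 1) := by
  by_cases hix : f i x = 0
  · by_cases hiy : f i y = 0
    · simp only [hix, hiy, zero_div, mul_zero, sub_zero, abs_zero]
      positivity
    · rw [abs_sub_comm, dist_comm]
      exact abs_weighted_ratio_sub_le hf hf_nonneg hs hy hx hSy hSx hw (hwy hiy) i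
  · exact abs_weighted_ratio_sub_le hf hf_nonneg hs hx hy hSx hSy hw (hwx hix) i

theorem exists_lipschitzWith_one_lp_normalized {w : ι → ℝ} {m : ℕ}
    (hf : ∀ i, LipschitzWith 1 (f i)) (hf_nonneg : ∀ i x, 0 ≤ f i x)
    (hfin : ∀ x, ∃ s : Finset ι, s.card ≤ m ∧ ∀ i ∉ s, f i x = 0)
    (hpos : ∀ x, ∃ i, 0 < f i x) (hw_nonneg : ∀ i, 0 ≤ w i)
    (hw_le : ∀ i x, f i x ≠ 0 → (2 * m + 1) ^ 2 * w i ≤ ⨆ j, f j x) :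
    ∃ p : X → lp (fun _ : ι => ℝ) 2,
      (∀ x i, p x i = w i * (f i x / ∑' j, f j x)) ∧ LipschitzWith 1 p := by
  classical
  choose t ht_card ht using hfin
  have hsum_eq : ∀ x, ∑' j, f j x = ∑ j ∈ t x, f j x := fun x => tsum_eq_sum (ht x)
  have hS_pos : ∀ x, 0 < ∑' j, f j x := fun x => by
    obtain ⟨i, hi⟩ := hpos x
    rw [hsum_eq]
    exact Finset.sum_pos' (fun j _ => hf_nonneg j x)
      ⟨i, by_contra fun h => hi.ne' (ht x i h), hi⟩
  have hw_le_sum : ∀ i x, f i x ≠ 0 → (2 * m + 1) ^ 2 * w i ≤ ∑' j, f j x := fun i x hi => by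
    rw [hsum_eq]
    exact (hw_le i x hi).trans <| Real.iSup_le
      (le_sum_of_forall_notMem_eq_zero (hf_nonneg · x) (ht x))
      (Finset.sum_nonneg fun j _ => hf_nonneg j x)
  have hcard : ∀ x y, (t x ∪ t y).card ≤ 2 * m := fun x y =>
    (Finset.card_union_le _ _).trans (by linarith [ht_card x, ht_card y])
  have hunion_left : ∀ x y, ∀ j ∉ t x ∪ t y, f j x = 0 := fun x y j hj =>
    ht x j fun h => hj (Finset.mem_union_left _ h)
  have hunion_right : ∀ x y, ∀ j ∉ t x ∪ t y, f j y = 0 := fun x y j hj =>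
    ht y j fun h => hj (Finset.mem_union_right _ h)
  set g : X → ι → ℝ := fun x i => w i * (f i x / ∑' j, f j x) with hg
  have hmem : ∀ x, Memℓp (g x) 2 := fun x =>
    (memℓp_zero ((t x).finite_toSet.subset fun i hi =>
      by_contra fun h => hi (by simp [hg, ht x i h]))).of_exponent_ge zero_le
  refine ⟨fun x => ⟨g x, hmem x⟩, fun _ _ => rfl, LipschitzWith.of_dist_le_mul fun x y => ?_⟩
  rw [dist_eq_norm, NNReal.coe_one, one_mul]
  have hc_pos : (0 : ℝ) < 2 * m + 1 := by positivity
  calc ‖(⟨g x, hmem x⟩ - ⟨g y, hmem y⟩ : lp (fun _ : ι => ℝ) 2)‖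
      ≤ √((t x ∪ t y).card) * (dist x y / (2 * m + 1)) :=
        lp.norm_two_le_sqrt_card_mul
          (fun i hi => show g x i - g y i = 0 by
            simp [hg, hunion_left x y i hi, hunion_right x y i hi])
          (by positivity) fun i =>
          abs_weighted_ratio_sub_le_of_union hf hf_nonneg (hcard x y) (hunion_left x y)
            (hunion_right x y) (hS_pos x) (hS_pos y) (hw_nonneg i) i (hw_le_sum i x)
            (hw_le_sum i y)
    _ ≤ (2 * m + 1) * (dist x y / (2 * m + 1)) := by
        gcongr
        have : ((t x ∪ t y).card : ℝ) ≤ 2 * m := by exact_mod_cast hcard x y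
        exact Real.sqrt_le_iff.mpr ⟨hc_pos.le, by nlinarith⟩
    _ = dist x y := mul_div_cancel₀ _ hc_pos.ne'

end NormalizedFamily

theorem exists_finset_card_le_of_finite {α : Type*} {A : Set α} {P : α → Prop} {m : ℕ}
    (h : {a | a ∈ A ∧ P a}.Finite ∧ Nat.card {a | a ∈ A ∧ P a} ≤ m) :
    ∃ s : Finset A, s.card ≤ m ∧ ∀ a : A, P a → a ∈ s := by
  classical
  refine ⟨h.1.toFinset.subtype (· ∈ A), ?_, fun a ha => by simp [ha]⟩
  rw [Finset.card_subtype]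
  exact (Finset.card_filter_le _ _).trans ((Nat.card_eq_card_finite_toFinset h.1).symm.trans_le h.2)

theorem stmt3_general (X : Type*) [MetricSpace X] (𝒰 : Set (Set X)) (m : ℕ)
    (hopen : ∀ U ∈ 𝒰, IsOpen U)
    (hcover : ∀ x : X, ∃ U ∈ 𝒰, x ∈ U)
    (hmult : ∀ x : X, {U : Set X | U ∈ 𝒰 ∧ x ∈ U}.Finite ∧
      Nat.card {U : Set X | U ∈ 𝒰 ∧ x ∈ U} ≤ m)
    (hcompl : ∀ U ∈ 𝒰, ((U : Set X)ᶜ).Nonempty) :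
    ∃ p : X → lp (fun _ : 𝒰 => ℝ) 2,
      (∀ (x : X) (U : 𝒰), (p x : ∀ _ : 𝒰, ℝ) U =
        ((⨅ z : (U : Set X), ⨆ V : 𝒰, infDist (z : X) ((V : Set X)ᶜ)) /
            (2 * (m : ℝ) + 1) ^ 2) *
          (infDist x ((U : Set X)ᶜ) / ∑' W : 𝒰, infDist x ((W : Set X)ᶜ))) ∧
      ∀ x y : X, ‖p x - p y‖ ≤ dist x y := by
  have hsup_nonneg : ∀ z : X, 0 ≤ ⨆ V : 𝒰, infDist z ((V : Set X)ᶜ) := fun z =>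
    Real.iSup_nonneg fun V => infDist_nonneg
  have hmem_of_ne : ∀ (U : 𝒰) (x : X), infDist x ((U : Set X)ᶜ) ≠ 0 → x ∈ (U : Set X) :=
    fun U x hx => by_contra fun h => hx (infDist_zero_of_mem h)
  obtain ⟨p, hp, hlip⟩ := exists_lipschitzWith_one_lp_normalized
    (f := fun (U : 𝒰) x => infDist x ((U : Set X)ᶜ))
    (w := fun U => (⨅ z : (U : Set X), ⨆ V : 𝒰, infDist (z : X) ((V : Set X)ᶜ)) /
      (2 * (m : ℝ) + 1) ^ 2)
    (fun U => lipschitz_infDist_pt _) (fun _ _ => infDist_nonneg)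
    (fun x => (exists_finset_card_le_of_finite (P := (x ∈ ·)) (hmult x)).imp fun s hs =>
      ⟨hs.1, fun U hU => by_contra fun hx => hU (hs.2 U (hmem_of_ne U x hx))⟩)
    (fun x => by
      obtain ⟨U, hU, hx⟩ := hcover x
      exact ⟨⟨U, hU⟩, ((hopen U hU).isClosed_compl.notMem_iff_infDist_pos (hcompl U hU)).1
        (not_not_intro hx)⟩)
    (fun U => div_nonneg (Real.iInf_nonneg fun z => hsup_nonneg z) (by positivity))
    (fun U x hx => by
      rw [mul_div_cancel₀ _ (by positivity)]
      exact ciInf_le (f := fun z : (U : Set X) => ⨆ V : 𝒰, infDist (z : X) ((V : Set X)ᶜ))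
        ⟨0, Set.forall_mem_range.2 fun z => hsup_nonneg z⟩ ⟨x, hmem_of_ne U x hx⟩)
  exact ⟨p, hp, fun x y => by simpa [dist_eq_norm] using hlip.dist_le_mul x y⟩

/-- the weighted partition-of-unity map `p : X → ℓ²(𝒰)`,
`p(x)_U = λ_U φ_U(x)` with `λ_U = L(𝒰)|_U/(2m+1)²`, takes values in `ℓ²(𝒰)` and is
`1`-Lipschitz. -/
theorem stmt3 (X : Type*) [MetricSpace X] (𝒰 : Set (Set X)) (m : ℕ)
    (hopen : ∀ U ∈ 𝒰, IsOpen U)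
    (hcover : ∀ x : X, ∃ U ∈ 𝒰, x ∈ U)
    (hlf : LocallyFinite (fun U : 𝒰 => (U : Set X)))
    (hmult : ∀ x : X, {U : Set X | U ∈ 𝒰 ∧ x ∈ U}.Finite ∧
      Nat.card {U : Set X | U ∈ 𝒰 ∧ x ∈ U} ≤ m)
    (hcompl : ∀ U ∈ 𝒰, ((U : Set X)ᶜ).Nonempty)
    (hLeb : ∀ U ∈ 𝒰,
      0 < ⨅ y : (U : Set X), ⨆ V : 𝒰, infDist (y : X) ((V : Set X)ᶜ)) :
    ∃ p : X → lp (fun _ : 𝒰 => ℝ) 2,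
      (∀ (x : X) (U : 𝒰), (p x : ∀ _ : 𝒰, ℝ) U =
        ((⨅ z : (U : Set X), ⨆ V : 𝒰, infDist (z : X) ((V : Set X)ᶜ)) /
            (2 * (m : ℝ) + 1) ^ 2) *
          (infDist x ((U : Set X)ᶜ) / ∑' W : 𝒰, infDist x ((W : Set X)ᶜ))) ∧
      ∀ x y : X, ‖p x - p y‖ ≤ dist x y :=
  stmt3_general X 𝒰 m hopen hcover hmult hcompl
end

section
/- Let G be a finitely generated abelian group, H an abelian group, and A : G → H a group homomorphism such that for every k ≥ 1 the induced homomorphism G ⊗ ℤ/2^kℤ → H ⊗ ℤ/2^kℤ is injective. Then the kernel of A is contained in the torsion subgroup of G; equivalently, the induced map A ⊗ ℚ : G ⊗ ℚ → H ⊗ ℚ is injective. -/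
/-!
An element `g` of the kernel of `A` maps to `0` in `H ⊗ ℤ/2^k`, so injectivity forces `g ⊗ 1 = 0`
in `G ⊗ ℤ/2^k = G/2^kG`, i.e. `g ∈ ⋂ₖ 2^kG`. Since `G` is finitely generated, Krull's intersection
theorem gives `r ∈ 2ℤ` with `r • g = g`; as `1 - r` is odd, `g` is torsion. Finally `ℚ` is a flat
`ℤ`-module in which every nonzero integer is invertible, so tensoring with `ℚ` kills the torsion
kernel and `A ⊗ ℚ` is injective.
-/

open TensorProduct

section

variable {R M N : Type*} [CommRing R] [AddCommGroup M] [Module R M] [AddCommGroup N] [Module R N]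

theorem TensorProduct.tmul_one_eq_zero_iff_mem_smul_top (I : Ideal R) (x : M) :
    x ⊗ₜ[R] (1 : R ⧸ I) = 0 ↔ x ∈ I • (⊤ : Submodule R M) := by
  rw [← (tensorQuotEquivQuotSMul M I).map_eq_zero_iff, ← map_one (Ideal.Quotient.mk I),
    tensorQuotEquivQuotSMul_tmul_mk, one_smul, Submodule.Quotient.mk_eq_zero]

theorem Submodule.mem_torsion_of_mem_iInf_pow_smul_top [IsDomain R] [IsNoetherianRing R]
    [Module.Finite R M] {I : Ideal R} (hI : I ≠ ⊤) {x : M}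
    (hx : x ∈ ⨅ k : ℕ, I ^ k • (⊤ : Submodule R M)) : x ∈ torsion R M := by
  obtain ⟨r, hr⟩ := (I.mem_iInf_smul_pow_eq_bot_iff x).mp hx
  have hr1 : 1 - (r : R) ≠ 0 := fun h ↦
    hI ((I.eq_top_iff_one).mpr (sub_eq_zero.mp h ▸ r.2))
  exact ⟨⟨1 - r, mem_nonZeroDivisors_of_ne_zero hr1⟩, by
    simp [Submonoid.smul_def, sub_smul, hr]⟩

theorem LinearMap.ker_le_torsion_of_injective_rTensor_quotient_pow [IsDomain R]
    [IsNoetherianRing R] [Module.Finite R M] (f : M →ₗ[R] N) {I : Ideal R} (hI : I ≠ ⊤)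
    (hf : ∀ k : ℕ, 1 ≤ k → Function.Injective (f.rTensor (R ⧸ I ^ k))) :
    ker f ≤ Submodule.torsion R M := by
  intro x hx
  refine Submodule.mem_torsion_of_mem_iInf_pow_smul_top hI (Submodule.mem_iInf _ |>.mpr ?_)
  intro k
  rcases Nat.eq_zero_or_pos k with rfl | hk
  · simp
  rw [← tmul_one_eq_zero_iff_mem_smul_top]
  apply hf k hk
  rw [rTensor_tmul, mem_ker.mp hx, zero_tmul, map_zero]

theorem LinearMap.injective_rTensor_of_linearEquiv {Q Q' : Type*} [AddCommGroup Q] [Module R Q]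
    [AddCommGroup Q'] [Module R Q'] (f : M →ₗ[R] N) (e : Q ≃ₗ[R] Q')
    (hf : Function.Injective (f.rTensor Q)) : Function.Injective (f.rTensor Q') := by
  have hconj : f.rTensor Q' =
      (e.lTensor N).toLinearMap ∘ₗ f.rTensor Q ∘ₗ (e.symm.lTensor M).toLinearMap := by
    ext; simp
  rw [hconj]
  exact (e.lTensor N).injective.comp (hf.comp (e.symm.lTensor M).injective)

theorem LinearMap.injective_rTensor_of_ker_le_torsion' {A : Type*} [CommRing A] [Algebra R A]
    (S : Submonoid R) [IsLocalization S A] (f : M →ₗ[R] N)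
    (hf : ker f ≤ Submodule.torsion' R M S) : Function.Injective (f.rTensor A) := by
  have : Module.Flat R A := IsLocalization.flat A S
  have hzero : (ker f).subtype.rTensor A = 0 := by
    refine TensorProduct.ext' fun x a ↦ ?_
    obtain ⟨s, hs⟩ := hf x.2
    obtain ⟨b, rfl⟩ := (IsLocalization.map_units A s).dvd (a := a)
    rw [rTensor_tmul, zero_apply, Submodule.subtype_apply, ← Algebra.smul_def, ← smul_tmul,
      ← Submonoid.smul_def, hs, zero_tmul]
  rw [← ker_eq_bot, (Module.Flat.rTensor_exact A (exact_subtype_ker_map f)).linearMap_ker_eq,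
    hzero, range_zero]

end

theorem Submodule.exists_nsmul_eq_zero_of_mem_torsion_int {G : Type*} [AddCommGroup G] {g : G}
    (hg : g ∈ torsion ℤ G) : ∃ m : ℕ, m ≠ 0 ∧ m • g = 0 := by
  have : IsOfFinAddOrder g := by
    rw [← AddCommGroup.mem_torsion, ← torsion_int]
    exact hg
  obtain ⟨m, hm, hmg⟩ := isOfFinAddOrder_iff_nsmul_eq_zero.mp this
  exact ⟨m, hm.ne', hmg⟩

/-- if `G` is a finitely generated abelian group and `A : G → H` is a homomorphism
of abelian groups such that `A ⊗ ℤ/2^k` is injective for all `k ≥ 1`, then `ker A` is contained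
in the torsion subgroup of `G`; equivalently, `A ⊗ ℚ` is injective. -/
theorem stmt8 (G H : Type*) [AddCommGroup G] [AddCommGroup H] [AddGroup.FG G]
    (A : G →+ H)
    (hinj : ∀ k : ℕ, 1 ≤ k →
      Function.Injective
        (TensorProduct.map A.toIntLinearMap
          (LinearMap.id : ZMod (2 ^ k) →ₗ[ℤ] ZMod (2 ^ k)))) :
    (∀ g : G, A g = 0 → ∃ m : ℕ, m ≠ 0 ∧ m • g = 0) ∧
    Function.Injective
      (TensorProduct.map A.toIntLinearMap (LinearMap.id : ℚ →ₗ[ℤ] ℚ)) := by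
  have h2 : Ideal.span {(2 : ℤ)} ≠ ⊤ := by
    rw [Ne, Ideal.span_singleton_eq_top, Int.isUnit_iff]
    decide
  have hker : LinearMap.ker A.toIntLinearMap ≤ Submodule.torsion ℤ G := by
    refine A.toIntLinearMap.ker_le_torsion_of_injective_rTensor_quotient_pow h2 fun k hk ↦ ?_
    rw [Ideal.span_singleton_pow, show (2 : ℤ) ^ k = ((2 ^ k : ℕ) : ℤ) by push_cast; rfl]
    exact A.toIntLinearMap.injective_rTensor_of_linearEquiv
      (Int.quotientSpanNatEquivZMod (2 ^ k)).symm.toAddEquiv.toIntLinearEquiv (hinj k hk)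
  exact ⟨fun g hg ↦ Submodule.exists_nsmul_eq_zero_of_mem_torsion_int (hker hg),
    A.toIntLinearMap.injective_rTensor_of_ker_le_torsion' (nonZeroDivisors ℤ) hker⟩
end

section
/- Let X be a proper metric space with basepoint x₀, let X̄ be its Higson compactification with canonical map ι : X → X̄, and let A, B ⊆ X be diverging subsets, i.e. for every D > 0 there is r > 0 such that dist(a, b) ≥ D for all a ∈ A ∖ B_r(x₀) and b ∈ B ∖ B_r(x₀). Then the closures of ι(A) and ι(B) in X̄ intersect only inside ι(X): cl(ι(A)) ∩ cl(ι(B)) ⊆ ι(X). -/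
open Metric BoundedContinuousFunction

section Higson

variable {X : Type*} [MetricSpace X]

/-- A function on the pointed metric space `X` has decaying variation if the diameters of images
of `R`-balls tend to zero at infinity. -/
def HasDecayingVariation (x₀ : X) (f : X →ᵇ ℂ) : Prop :=
  ∀ R : ℝ, 0 < R → ∀ ε : ℝ, 0 < ε → ∃ t : ℝ, 0 < t ∧ ∀ x : X, t ≤ dist x x₀ →
    EMetric.diam (⇑f '' closedBall x R) ≤ ENNReal.ofReal ε

/-- The Higson algebra: the closed star-subalgebra of `C_b(X, ℂ)` generated by the constants and
the bounded continuous functions of decaying variation. -/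
noncomputable def higsonAlgebra (x₀ : X) : StarSubalgebra ℂ (X →ᵇ ℂ) :=
  (StarAlgebra.adjoin ℂ {f : X →ᵇ ℂ | HasDecayingVariation x₀ f}).topologicalClosure

/-- The Higson compactification: the character space (Gelfand spectrum) of the Higson algebra. -/
def HigsonCompactification (x₀ : X) :=
  WeakDual.characterSpace ℂ ↥(higsonAlgebra x₀)

/-- Evaluation at a point of `X`, as a continuous linear functional on the Higson algebra. -/
noncomputable def higsonEvalCLM (x₀ x : X) : WeakDual ℂ ↥(higsonAlgebra x₀) :=
  { toFun := fun f => (f : X →ᵇ ℂ) x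
    map_add' := fun _ _ => rfl
    map_smul' := fun _ _ => rfl
    cont := (lipschitz_eval_const x).continuous.comp continuous_subtype_val }

theorem higsonEvalCLM_mem (x₀ x : X) :
    higsonEvalCLM x₀ x ∈ WeakDual.characterSpace ℂ ↥(higsonAlgebra x₀) := by
  constructor
  · intro h
    have h1 : higsonEvalCLM x₀ x (1 : ↥(higsonAlgebra x₀)) = 0 := by rw [h]; rfl
    exact one_ne_zero (α := ℂ) h1
  · intro f g
    rfl

/-- The canonical map `ι` from `X` to its Higson compactification, sending `x` to the evaluation
character. -/
noncomputable def higsonIota (x₀ : X) (x : X) : HigsonCompactification x₀ :=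
  ⟨higsonEvalCLM x₀ x, higsonEvalCLM_mem x₀ x⟩

end Higson

/-!
Suppose `χ` lies in both closures but not in `ι(X)`. Since `X` is proper, `ι` maps closed balls
to compact, hence closed, subsets of `ι(X)`, so `χ` is still in the closures of the images of the
tails `A' = A \ B_r(x₀)` and `B' = B \ B_r(x₀)`, where `r` is chosen so that `A'` and `B'` are
`1`-separated. The function `d(x, A') / (d(x, A') + d(x, B'))` is `0` on `A'` and `1` on `B'`, and
it has decaying variation: far from `x₀` no point is close to both `A'` and `B'`, so the
denominator is large and the function has small Lipschitz constant there. Hence `χ` would take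
both values `0` and `1` on it.
-/

open Set

lemma abs_div_add_sub_div_add_le {u v u' v' c d : ℝ} (hu : 0 ≤ u) (hv : 0 ≤ v) (hc : 0 < c)
    (hcuv : c ≤ u + v) (hcuv' : c ≤ u' + v') (hdu : |u - u'| ≤ d) (hdv : |v - v'| ≤ d) :
    |u / (u + v) - u' / (u' + v')| ≤ d / c := by
  have hs : 0 < u + v := hc.trans_le hcuv
  have hs' : 0 < u' + v' := hc.trans_le hcuv'
  have hnum : |u * v' - u' * v| ≤ (u + v) * d :=
    calc |u * v' - u' * v| = |u * (v' - v) + (u - u') * v| := by ring_nf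
      _ ≤ u * |v - v'| + |u - u'| * v := by
        rw [abs_sub_comm v v']
        simpa only [abs_mul, abs_of_nonneg hu, abs_of_nonneg hv]
          using abs_add_le (u * (v' - v)) ((u - u') * v)
      _ ≤ u * d + d * v := by gcongr
      _ = (u + v) * d := by ring
  calc |u / (u + v) - u' / (u' + v')|
        = |u * v' - u' * v| / ((u + v) * (u' + v')) := by
        rw [div_sub_div _ _ hs.ne' hs'.ne', abs_div, abs_of_pos (mul_pos hs hs')]
        ring_nf
    _ ≤ (u + v) * d / ((u + v) * (u' + v')) := by gcongr
    _ = d / (u' + v') := mul_div_mul_left _ _ hs.ne'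
    _ ≤ d / c := div_le_div_of_nonneg_left ((abs_nonneg _).trans hdu) hc hcuv'

section Separation

variable {X : Type*} [MetricSpace X] {s t : Set X}

lemma le_infDist_add_infDist {c : ℝ} (hs : s.Nonempty) (ht : t.Nonempty)
    (hsep : ∀ a ∈ s, ∀ b ∈ t, c ≤ dist a b) (x : X) : c ≤ infDist x s + infDist x t := by
  by_contra! h
  obtain ⟨a, ha, hxa⟩ := (infDist_lt_iff hs).1 (show infDist x s < c - infDist x t by linarith)
  obtain ⟨b, hb, hxb⟩ := (infDist_lt_iff ht).1 (show infDist x t < c - dist x a by linarith)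
  linarith [hsep a ha b hb, dist_triangle_left a b x]

def Diverging (x₀ : X) (A B : Set X) : Prop :=
  ∀ D : ℝ, 0 < D → ∃ r : ℝ, 0 < r ∧
    ∀ a ∈ A, a ∉ closedBall x₀ r → ∀ b ∈ B, b ∉ closedBall x₀ r → D ≤ dist a b

lemma Diverging.mono {x₀ : X} {A B : Set X} (h : Diverging x₀ A B) (hs : s ⊆ A)
    (ht : t ⊆ B) : Diverging x₀ s t := fun D hD ↦
  (h D hD).imp fun _ ⟨hr, hsep⟩ ↦
    ⟨hr, fun a ha ha' b hb hb' ↦ hsep a (hs ha) ha' b (ht hb) hb'⟩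

lemma Diverging.exists_le_infDist_add_infDist {x₀ : X} (h : Diverging x₀ s t)
    (hs : s.Nonempty) (ht : t.Nonempty) {M : ℝ} (hM : 0 < M) :
    ∃ r : ℝ, ∀ z, r < dist z x₀ → M ≤ infDist z s + infDist z t := by
  obtain ⟨r, -, hr⟩ := h (2 * M) (by positivity)
  refine ⟨r + M, fun z hz ↦ ?_⟩
  by_contra! hlt
  have hzs : 0 ≤ infDist z s := infDist_nonneg
  have hzt : 0 ≤ infDist z t := infDist_nonneg
  obtain ⟨a, ha, hza⟩ := (infDist_lt_iff hs).1 (show infDist z s < M by linarith)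
  obtain ⟨b, hb, hzb⟩ := (infDist_lt_iff ht).1 (show infDist z t < M by linarith)
  have hfar : ∀ y, dist z y < M → y ∉ closedBall x₀ r := fun y hy ↦ by
    rw [mem_closedBall, not_le]; linarith [dist_triangle z y x₀]
  linarith [hr a ha (hfar a hza) b hb (hfar b hzb), dist_triangle_left a b z]

noncomputable def infDistRatio (s t : Set X) (x : X) : ℝ :=
  infDist x s / (infDist x s + infDist x t)

lemma infDistRatio_mem_Icc (x : X) : infDistRatio s t x ∈ Icc 0 1 :=
  ⟨div_nonneg infDist_nonneg (add_nonneg infDist_nonneg infDist_nonneg),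
    div_le_one_of_le₀ (le_add_of_nonneg_right infDist_nonneg)
      (add_nonneg infDist_nonneg infDist_nonneg)⟩

lemma infDistRatio_eq_zero {x : X} (hx : x ∈ s) : infDistRatio s t x = 0 := by
  simp [infDistRatio, infDist_zero_of_mem hx]

lemma infDistRatio_eq_one {x : X} (hx : x ∈ t) (hsx : infDist x s ≠ 0) :
    infDistRatio s t x = 1 := by
  simp [infDistRatio, infDist_zero_of_mem hx, hsx]

lemma continuous_infDistRatio (hpos : ∀ x, infDist x s + infDist x t ≠ 0) :
    Continuous (infDistRatio s t) :=
  (continuous_infDist_pt s).div ((continuous_infDist_pt s).add (continuous_infDist_pt t)) hpos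

lemma abs_infDistRatio_sub_le {c : ℝ} (hc : 0 < c) {y z : X}
    (hy : c ≤ infDist y s + infDist y t) (hz : c ≤ infDist z s + infDist z t) :
    |infDistRatio s t y - infDistRatio s t z| ≤ dist y z / c :=
  abs_div_add_sub_div_add_le infDist_nonneg infDist_nonneg hc hy hz
    (abs_sub_le_iff.2 ⟨by linarith [infDist_le_infDist_add_dist (x := y) (y := z) (s := s)],
      by linarith [infDist_le_infDist_add_dist (x := z) (y := y) (s := s), dist_comm y z]⟩)
    (abs_sub_le_iff.2 ⟨by linarith [infDist_le_infDist_add_dist (x := y) (y := z) (s := t)],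
      by linarith [infDist_le_infDist_add_dist (x := z) (y := y) (s := t), dist_comm y z]⟩)

end Separation

section HigsonIota

variable {X : Type*} [MetricSpace X] {x₀ : X}

lemma Diverging.exists_hasDecayingVariation {s t : Set X} (h : Diverging x₀ s t)
    (hs : s.Nonempty) (ht : t.Nonempty) {c : ℝ} (hc : 0 < c)
    (hsep : ∀ a ∈ s, ∀ b ∈ t, c ≤ dist a b) :
    ∃ F : X →ᵇ ℂ, HasDecayingVariation x₀ F ∧ (∀ a ∈ s, F a = 0) ∧ (∀ b ∈ t, F b = 1) := by
  have hden (x : X) : c ≤ infDist x s + infDist x t := le_infDist_add_infDist hs ht hsep x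
  have hden_pos (x : X) : infDist x s + infDist x t ≠ 0 := (hc.trans_le (hden x)).ne'
  let F : X →ᵇ ℂ := ofNormedAddCommGroup (fun x ↦ (infDistRatio s t x : ℂ))
    (Complex.continuous_ofReal.comp (continuous_infDistRatio hden_pos)) 1 fun x ↦ by
      rw [Complex.norm_real, Real.norm_of_nonneg (infDistRatio_mem_Icc x).1]
      exact (infDistRatio_mem_Icc x).2
  have hinfDist_ne (b : X) (hb : b ∈ t) : infDist b s ≠ 0 := by
    simpa [infDist_zero_of_mem hb] using hden_pos b
  refine ⟨F, fun R hR ε hε ↦ ?_, fun a ha ↦ by simp [F, infDistRatio_eq_zero ha],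
    fun b hb ↦ by simp [F, infDistRatio_eq_one hb (hinfDist_ne b hb)]⟩
  obtain ⟨r, hr⟩ := h.exists_le_infDist_add_infDist hs ht (M := 2 * R / ε) (by positivity)
  refine ⟨max (r + R + 1) 1, by positivity, fun x hx ↦ ediam_le ?_⟩
  have hfar (w : X) (hw : w ∈ closedBall x R) : 2 * R / ε ≤ infDist w s + infDist w t :=
    hr w (by linarith [le_max_left (r + R + 1) 1, dist_triangle x w x₀, mem_closedBall'.1 hw])
  rintro _ ⟨y, hy, rfl⟩ _ ⟨z, hz, rfl⟩
  rw [edist_le_ofReal hε.le]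
  calc dist (F y) (F z) = |infDistRatio s t y - infDistRatio s t z| := by
        rw [coe_ofNormedAddCommGroup, Complex.isometry_ofReal.dist_eq, Real.dist_eq]
    _ ≤ dist y z / (2 * R / ε) :=
        abs_infDistRatio_sub_le (by positivity) (hfar y hy) (hfar z hz)
    _ ≤ 2 * R / (2 * R / ε) := by
        gcongr
        linarith [dist_triangle_right y z x, mem_closedBall.1 hy, mem_closedBall.1 hz]
    _ = ε := by field_simp

lemma HasDecayingVariation.mem_higsonAlgebra {F : X →ᵇ ℂ} (hF : HasDecayingVariation x₀ F) :
    F ∈ higsonAlgebra x₀ :=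
  StarSubalgebra.le_topologicalClosure _ (StarAlgebra.subset_adjoin ℂ _ hF)

instance : T2Space (HigsonCompactification x₀) := by
  unfold HigsonCompactification
  infer_instance

lemma continuous_higsonIota : Continuous (higsonIota x₀) :=
  (WeakDual.continuous_of_continuous_eval (g := higsonEvalCLM x₀)
    fun f ↦ (f : X →ᵇ ℂ).continuous).subtype_mk _

lemma apply_eq_of_mem_closure_image_higsonIota {S : Set X} {χ : HigsonCompactification x₀}
    (hχ : χ ∈ closure (higsonIota x₀ '' S)) {F : X →ᵇ ℂ} (hF : F ∈ higsonAlgebra x₀) {c : ℂ}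
    (hFc : ∀ x ∈ S, F x = c) : (χ : WeakDual ℂ (higsonAlgebra x₀)) ⟨F, hF⟩ = c := by
  have hcont : Continuous fun ψ : HigsonCompactification x₀ ↦
      (ψ : WeakDual ℂ (higsonAlgebra x₀)) ⟨F, hF⟩ :=
    (WeakDual.eval_continuous _).comp continuous_subtype_val
  have := map_mem_closure hcont hχ (t := {c}) (by rintro _ ⟨x, hx, rfl⟩; exact hFc x hx)
  rwa [closure_singleton] at this

variable [ProperSpace X]

lemma closure_image_higsonIota_subset_range {S : Set X} (hS : Bornology.IsBounded S) :
    closure (higsonIota x₀ '' S) ⊆ range (higsonIota x₀) :=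
  (closure_minimal (image_mono subset_closure)
    (hS.isCompact_closure.image continuous_higsonIota).isClosed).trans (image_subset_range _ _)

lemma mem_closure_image_higsonIota_diff_closedBall {A : Set X}
    {χ : HigsonCompactification x₀} (hχ : χ ∈ closure (higsonIota x₀ '' A))
    (hχX : χ ∉ range (higsonIota x₀)) (r : ℝ) :
    χ ∈ closure (higsonIota x₀ '' (A \ closedBall x₀ r)) := by
  rw [← inter_union_sdiff A (closedBall x₀ r), image_union, closure_union] at hχ
  have hbdd : Bornology.IsBounded (A ∩ closedBall x₀ r) :=
    isBounded_closedBall.subset inter_subset_right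
  exact hχ.resolve_left fun h ↦ hχX (closure_image_higsonIota_subset_range hbdd h)

end HigsonIota

/-- if `A, B` are diverging subsets of a proper metric space `X`, then the closures
of `ι(A)` and `ι(B)` in the Higson compactification meet only inside `ι(X)`. -/
theorem stmt9 (X : Type*) [MetricSpace X] [ProperSpace X] (x₀ : X) (A B : Set X)
    (hdiv : ∀ D : ℝ, 0 < D → ∃ r : ℝ, 0 < r ∧
      ∀ a ∈ A, a ∉ closedBall x₀ r → ∀ b ∈ B, b ∉ closedBall x₀ r → D ≤ dist a b) :
    closure (higsonIota x₀ '' A) ∩ closure (higsonIota x₀ '' B) ⊆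
      Set.range (higsonIota x₀) := by
  rintro χ ⟨hA, hB⟩
  by_contra hχX
  obtain ⟨r, -, hsep⟩ := hdiv 1 one_pos
  have hA' := mem_closure_image_higsonIota_diff_closedBall hA hχX r
  have hB' := mem_closure_image_higsonIota_diff_closedBall hB hχX r
  have hdiv' : Diverging x₀ A B := hdiv
  obtain ⟨F, hF, hF0, hF1⟩ := (hdiv'.mono sdiff_subset sdiff_subset).exists_hasDecayingVariation
    (image_nonempty.1 (closure_nonempty_iff.1 ⟨χ, hA'⟩))
    (image_nonempty.1 (closure_nonempty_iff.1 ⟨χ, hB'⟩)) one_pos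
    fun a ha b hb ↦ hsep a ha.1 ha.2 b hb.1 hb.2
  have hχF0 := apply_eq_of_mem_closure_image_higsonIota hA' hF.mem_higsonAlgebra hF0
  have hχF1 := apply_eq_of_mem_closure_image_higsonIota hB' hF.mem_higsonAlgebra hF1
  exact zero_ne_one (hχF0.symm.trans hχF1)
end

section
/- Let X be a proper metric space with basepoint, let X̄ be its Higson compactification with canonical map ι : X → X̄, and let Z be a compact metric space. A continuous map f : X → Z admits a continuous extension over X̄, i.e. a continuous F : X̄ → Z with F ∘ ι = f, if and only if f has decaying variation, that is, for every R > 0 one has lim_{dist(x,x₀)→∞} diam f(B_R(x)) = 0. -/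
/-!
Composition with a map `f` of decaying variation sends `C(Z, ℂ)` into the Higson algebra (continuous
functions on the compact space `Z` are uniformly continuous), and Gelfand duality turns this
star-algebra map into a continuous map from the Higson compactification to
`characterSpace ℂ C(Z, ℂ) ≃ₜ Z` extending `f`.

Conversely, for each `R > 0` the bounded functions `g` with `g a - g b → 0` as `a → ∞` with
`dist a b ≤ R` form a closed star subalgebra, so every Higson function has this property. Hence
if `a i → ∞` and `dist (a i) (b i) ≤ R`, then `ι (a i)` and `ι (b i)` have the same limits in the
compactification. Along any ultrafilter both converge (by compactness), so an extension `F` forces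
`dist (f (a i)) (f (b i)) → 0`, which is decaying variation.
-/

open Metric BoundedContinuousFunction

open Filter Topology Bornology

section DecayingVariation

variable {X Z : Type*} [PseudoMetricSpace X] [PseudoMetricSpace Z]

/-- `HasDecayingVariation x₀ g` unfolds to `DecayingVariation x₀ ⇑g`. -/
def DecayingVariation (x₀ : X) (f : X → Z) : Prop :=
  ∀ R : ℝ, 0 < R → ∀ ε : ℝ, 0 < ε → ∃ t : ℝ, 0 < t ∧ ∀ x : X, t ≤ dist x x₀ →
    ediam (f '' closedBall x R) ≤ ENNReal.ofReal ε

theorem decayingVariation_iff_dist_le {x₀ : X} {f : X → Z} :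
    DecayingVariation x₀ f ↔ ∀ R : ℝ, 0 < R → ∀ ε : ℝ, 0 < ε → ∃ t : ℝ, 0 < t ∧
      ∀ x : X, t ≤ dist x x₀ → ∀ y ∈ closedBall x R, ∀ z ∈ closedBall x R,
        dist (f y) (f z) ≤ ε := by
  refine forall₂_congr fun R _ => forall₂_congr fun ε hε => exists_congr fun t => and_congr_right
    fun _ => forall₂_congr fun x _ => ?_
  simp only [ediam_image_le_iff, edist_dist, ENNReal.ofReal_le_ofReal_iff hε.le]

theorem DecayingVariation.comp {x₀ : X} {f : X → Z} {W : Type*} [PseudoMetricSpace W]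
    {g : Z → W} (hf : DecayingVariation x₀ f) (hg : UniformContinuous g) :
    DecayingVariation x₀ (g ∘ f) := by
  rw [decayingVariation_iff_dist_le] at hf ⊢
  intro R hR ε hε
  obtain ⟨δ, hδ, hgδ⟩ := Metric.uniformContinuous_iff_le.1 hg ε hε
  obtain ⟨t, ht, hft⟩ := hf R hR δ hδ
  exact ⟨t, ht, fun x hx y hy z hz => hgδ (hft x hx y hy z hz)⟩

theorem decayingVariation_of_tendsto_dist {x₀ : X} {f : X → Z}
    (h : ∀ R : ℝ, 0 < R → ∀ a b : ℕ → X, Tendsto a atTop (cobounded X) →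
      (∀ n, dist (a n) (b n) ≤ R) → Tendsto (fun n => dist (f (a n)) (f (b n))) atTop (𝓝 0)) :
    DecayingVariation x₀ f := by
  rw [decayingVariation_iff_dist_le]
  intro R hR ε hε
  by_contra! hfar
  choose x hx a ha b hb hab using fun n : ℕ => hfar (n + 1) n.cast_add_one_pos
  have ha_far : Tendsto a atTop (cobounded X) := by
    rw [← tendsto_dist_right_atTop_iff x₀]
    refine tendsto_atTop_mono (fun n => ?_)
      (tendsto_atTop_add_const_right _ (1 - R) tendsto_natCast_atTop_atTop)
    linarith [hx n, dist_triangle (x n) (a n) x₀, mem_closedBall'.1 (ha n)]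
  have hab_near : ∀ n, dist (a n) (b n) ≤ 2 * R := fun n => by
    linarith [dist_triangle_left (a n) (b n) (x n), mem_closedBall'.1 (ha n),
      mem_closedBall'.1 (hb n)]
  obtain ⟨n, hn⟩ := ((h _ (by positivity) a b ha_far hab_near).eventually_lt_const hε).exists
  exact (hab n).not_gt hn

variable (X) in
def nearPairsAtInfinity (R : ℝ) : Filter (X × X) :=
  comap Prod.fst (cobounded X) ⊓ 𝓟 {p | dist p.1 p.2 ≤ R}

theorem DecayingVariation.tendsto_sub {x₀ : X} {g : X →ᵇ ℂ} (hg : DecayingVariation x₀ g)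
    {R : ℝ} (hR : 0 < R) :
    Tendsto (fun p => g p.1 - g p.2) (nearPairsAtInfinity X R) (𝓝 0) := by
  rw [Metric.tendsto_nhds]
  intro ε hε
  obtain ⟨t, -, hgt⟩ := decayingVariation_iff_dist_le.1 hg R hR (ε / 2) (half_pos hε)
  have hfar : ∀ᶠ x in cobounded X, t ≤ dist x x₀ :=
    (tendsto_dist_right_cobounded_atTop x₀).eventually_ge_atTop t
  filter_upwards [(hfar.comap Prod.fst).filter_mono inf_le_left,
    mem_inf_of_right (mem_principal_self _)] with p hp₁ hp₂
  rw [dist_zero_right, ← dist_eq_norm]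
  exact (hgt p.1 hp₁ p.1 (mem_closedBall_self hR.le) p.2 (mem_closedBall'.2 hp₂)).trans_lt
    (half_lt_self hε)

end DecayingVariation

section VanishingOscillation

variable {X : Type*} [TopologicalSpace X]

def vanishingOscillationSubalgebra (L : Filter (X × X)) : StarSubalgebra ℂ (X →ᵇ ℂ) where
  carrier := {g | Tendsto (fun p => g p.1 - g p.2) L (𝓝 0)}
  mul_mem' {g h} hg hh := by
    have hbdd (u : X →ᵇ ℂ) (i : X × X → X) : IsBoundedUnder (· ≤ ·) L (norm ∘ fun p => u (i p)) :=
      isBoundedUnder_of ⟨‖u‖, fun p => u.norm_coe_le_norm (i p)⟩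
    -- `g x * h x - g y * h y = g x * (h x - h y) + (g x - g y) * h y`: bounded times vanishing
    have hsplit := (isBoundedUnder_le_mul_tendsto_zero (hbdd g Prod.fst) hh).add
      (hg.zero_mul_isBoundedUnder_le (hbdd h Prod.snd))
    rw [add_zero] at hsplit
    refine hsplit.congr fun p => ?_
    simp only [coe_mul, Pi.mul_apply]
    ring
  one_mem' := by simpa using tendsto_const_nhds
  add_mem' {g h} hg hh := by simpa [add_sub_add_comm] using hg.add hh
  zero_mem' := by simpa using tendsto_const_nhds
  algebraMap_mem' c := by simpa using tendsto_const_nhds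
  star_mem' {g} hg := by simpa [← star_sub] using hg.star

theorem isClosed_vanishingOscillationSubalgebra (L : Filter (X × X)) :
    IsClosed (vanishingOscillationSubalgebra L : Set (X →ᵇ ℂ)) :=
  (LipschitzWith.uniformEquicontinuous (fun (p : X × X) (g : X →ᵇ ℂ) => g p.1 - g p.2) (1 + 1)
      fun p => (lipschitz_eval_const p.1).sub (lipschitz_eval_const p.2)).equicontinuous
    |>.isClosed_setOfPred_tendsto continuous_const

end VanishingOscillation

section HigsonExtension

variable {X : Type*} [MetricSpace X]

instance (x₀ : X) : CompleteSpace (higsonAlgebra x₀) :=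
  (StarAlgebra.adjoin ℂ {f : X →ᵇ ℂ | HasDecayingVariation x₀ f}).isClosed_topologicalClosure
    |>.completeSpace_coe

instance (x₀ : X) : CompactSpace (HigsonCompactification x₀) :=
  inferInstanceAs (CompactSpace (WeakDual.characterSpace ℂ (higsonAlgebra x₀)))

theorem higsonAlgebra_le_vanishingOscillationSubalgebra (x₀ : X) {R : ℝ} (hR : 0 < R) :
    higsonAlgebra x₀ ≤ vanishingOscillationSubalgebra (nearPairsAtInfinity X R) :=
  StarSubalgebra.topologicalClosure_minimal
    (StarAlgebra.adjoin_le fun _ hg => DecayingVariation.tendsto_sub hg hR)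
    (isClosed_vanishingOscillationSubalgebra _)

theorem tendsto_higsonIota_of_dist_le {ι : Type*} {l : Filter ι} {x₀ : X} {a b : ι → X} {R : ℝ}
    {ω : HigsonCompactification x₀} (hR : 0 < R) (ha : Tendsto a l (cobounded X))
    (hab : ∀ i, dist (a i) (b i) ≤ R) (hω : Tendsto (fun i => higsonIota x₀ (a i)) l (𝓝 ω)) :
    Tendsto (fun i => higsonIota x₀ (b i)) l (𝓝 ω) := by
  have hpair : Tendsto (fun i => (a i, b i)) l (nearPairsAtInfinity X R) :=
    tendsto_inf.2 ⟨tendsto_comap_iff.2 ha, tendsto_principal.2 (.of_forall hab)⟩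
  refine tendsto_subtype_rng.2 (tendsto_iff_forall_eval_tendsto_topDualPairing.2 fun g => ?_)
  have hga := tendsto_iff_forall_eval_tendsto_topDualPairing.1 (tendsto_subtype_rng.1 hω) g
  have hgab := (higsonAlgebra_le_vanishingOscillationSubalgebra x₀ hR g.2).comp hpair
  have hgb := hga.sub hgab
  rw [sub_zero] at hgb
  exact hgb.congr fun _ => sub_sub_cancel _ _

theorem tendsto_dist_of_higson_extension {x₀ : X} {Z : Type*} [MetricSpace Z] {f : X → Z}
    (F : C(HigsonCompactification x₀, Z)) (hF : ∀ x, F (higsonIota x₀ x) = f x)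
    {ι : Type*} {l : Filter ι} {a b : ι → X} {R : ℝ} (hR : 0 < R)
    (ha : Tendsto a l (cobounded X)) (hab : ∀ i, dist (a i) (b i) ≤ R) :
    Tendsto (fun i => dist (f (a i)) (f (b i))) l (𝓝 0) := by
  rw [tendsto_iff_ultrafilter]
  intro U hU
  obtain ⟨ω, hω⟩ : ∃ ω, Tendsto (fun i => higsonIota x₀ (a i)) U (𝓝 ω) :=
    ⟨_, (U.map fun i => higsonIota x₀ (a i)).le_nhds_lim⟩
  have hωb := tendsto_higsonIota_of_dist_le hR (ha.mono_left hU) hab hω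
  simpa [hF] using ((F.continuous.tendsto ω).comp hω).dist ((F.continuous.tendsto ω).comp hωb)

variable {Z : Type*} [MetricSpace Z] [CompactSpace Z]

theorem compContinuous_mem_higsonAlgebra {x₀ : X} {f : C(X, Z)} (hf : DecayingVariation x₀ f)
    (g : C(Z, ℂ)) : (mkOfCompact g).compContinuous f ∈ higsonAlgebra x₀ :=
  StarSubalgebra.le_topologicalClosure _ <| StarAlgebra.subset_adjoin _ _ <|
    hf.comp (CompactSpace.uniformContinuous_of_continuous g.continuous)

noncomputable def higsonCompStarAlgHom {x₀ : X} (f : C(X, Z)) (hf : DecayingVariation x₀ f) :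
    C(Z, ℂ) →⋆ₐ[ℂ] higsonAlgebra x₀ where
  toFun g := ⟨(mkOfCompact g).compContinuous f, compContinuous_mem_higsonAlgebra hf g⟩
  map_one' := rfl
  map_mul' _ _ := rfl
  map_zero' := rfl
  map_add' _ _ := rfl
  commutes' _ := rfl
  map_star' _ := rfl

theorem exists_higson_extension_of_decayingVariation {x₀ : X} (f : C(X, Z))
    (hf : DecayingVariation x₀ f) :
    ∃ F : C(HigsonCompactification x₀, Z), ∀ x, F (higsonIota x₀ x) = f x :=
  ⟨((WeakDual.CharacterSpace.homeoEval Z ℂ).symm : C(_, Z)).comp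
      (WeakDual.CharacterSpace.compContinuousMap (higsonCompStarAlgHom f hf)),
    fun _ => (Homeomorph.symm_apply_eq _).2 (WeakDual.CharacterSpace.ext fun _ => rfl)⟩

end HigsonExtension

theorem stmt10_general (X : Type*) [MetricSpace X] (x₀ : X)
    (Z : Type*) [MetricSpace Z] [CompactSpace Z]
    (f : X → Z) (hf : Continuous f) :
    (∃ F : C(HigsonCompactification x₀, Z), ∀ x : X, F (higsonIota x₀ x) = f x) ↔
    (∀ R : ℝ, 0 < R → ∀ ε : ℝ, 0 < ε → ∃ t : ℝ, 0 < t ∧ ∀ x : X, t ≤ dist x x₀ →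
      EMetric.diam (f '' closedBall x R) ≤ ENNReal.ofReal ε) :=
  ⟨fun ⟨F, hF⟩ => decayingVariation_of_tendsto_dist fun _ hR _ _ ha hab =>
      tendsto_dist_of_higson_extension F hF hR ha hab,
    exists_higson_extension_of_decayingVariation ⟨f, hf⟩⟩

/-- a continuous map `f` from a proper metric space `X` to a compact metric space
`Z` extends continuously over the Higson compactification if and only if `f` has decaying
variation. -/
theorem stmt10 (X : Type*) [MetricSpace X] [ProperSpace X] (x₀ : X)
    (Z : Type*) [MetricSpace Z] [CompactSpace Z]
    (f : X → Z) (hf : Continuous f) :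
    (∃ F : C(HigsonCompactification x₀, Z), ∀ x : X, F (higsonIota x₀ x) = f x) ↔
    (∀ R : ℝ, 0 < R → ∀ ε : ℝ, 0 < ε → ∃ t : ℝ, 0 < t ∧ ∀ x : X, t ≤ dist x x₀ →
      EMetric.diam (f '' closedBall x R) ≤ ENNReal.ofReal ε) :=
  stmt10_general X x₀ Z f hf
end

section
/- Let K be the underlying space of a finite geometric simplicial complex in a Euclidean space ℝ^N, with the metric induced from ℝ^N. Then there exists ε > 0 such that for every topological space W and all continuous maps f, g : W → K with dist(f(w), g(w)) ≤ ε for every w ∈ W, the maps f and g are homotopic. -/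
/-!
Every point `x` of `K` has well-defined barycentric coordinates `b x : E → ℝ`, continuous on `K`
because they are affine on each of the finitely many closed faces and agree on overlaps. The open
stars `{x | 0 < b x v}` cover the compact space `K`; let `2ε` be a Lebesgue number of this cover.
If `f w` and `g w` are `ε`-close they share a vertex `v` of positive weight, so the normalised
minimum `m w` of `b (f w)` and `b (g w)` is a well-defined point depending continuously on `w`,
and it lies in the closed faces carrying `f w` and `g w`. The straight-line homotopies from `f`
and from `g` to `m` therefore stay inside `K`.
-/

open Metric Set Function

section Barycentric

variable {E : Type*} [AddCommGroup E] [Module ℝ E]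

structure IsBarycentricCoords (s : Finset E) (w : E → ℝ) (x : E) : Prop where
  nonneg : ∀ v, 0 ≤ w v
  eq_zero_of_notMem : ∀ v ∉ s, w v = 0
  sum_eq_one : ∑ v ∈ s, w v = 1
  sum_smul_eq : ∑ v ∈ s, w v • v = x

theorem Finset.exists_isBarycentricCoords_of_mem_convexHull {s : Finset E} {x : E}
    (hx : x ∈ convexHull ℝ (s : Set E)) : ∃ w, IsBarycentricCoords s w x := by
  classical
  obtain ⟨w, hw₀, hw₁, hwx⟩ := Finset.mem_convexHull'.1 hx
  refine ⟨fun v => if v ∈ s then w v else 0, ⟨fun v => ?_, fun v hv => if_neg hv, ?_, ?_⟩⟩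
  · split_ifs with hv
    exacts [hw₀ v hv, le_rfl]
  · rwa [Finset.sum_congr rfl fun v hv => if_pos hv]
  · rwa [Finset.sum_congr rfl fun v hv => by rw [if_pos hv]]

theorem Finset.centerMass_mem_convexHull_support (t : Finset E) {c b : E → ℝ}
    (hc₀ : ∀ v ∈ t, 0 ≤ c v) (hc : 0 < ∑ v ∈ t, c v) (hcb : ∀ v ∈ t, c v ≤ b v) :
    t.centerMass c id ∈ convexHull ℝ (support b) := by
  classical
  rw [← Finset.centerMass_filter_ne_zero]
  refine Finset.centerMass_mem_convexHull _ (fun v hv => hc₀ v (Finset.mem_filter.1 hv).1)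
    (by rwa [Finset.sum_filter_ne_zero]) fun v hv => ?_
  obtain ⟨hvt, hv⟩ := Finset.mem_filter.1 hv
  exact (((hc₀ v hvt).lt_of_ne' hv).trans_le (hcb v hvt)).ne'

namespace IsBarycentricCoords

variable {s t : Finset E} {w : E → ℝ} {x : E}

theorem mono (h : IsBarycentricCoords s w x) (hst : s ⊆ t) : IsBarycentricCoords t w x where
  nonneg := h.nonneg
  eq_zero_of_notMem v hv := h.eq_zero_of_notMem v fun hvs => hv (hst hvs)
  sum_eq_one := by
    rw [← Finset.sum_subset hst fun v _ hv => h.eq_zero_of_notMem v hv, h.sum_eq_one]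
  sum_smul_eq := by
    rw [← Finset.sum_subset hst fun v _ hv => by rw [h.eq_zero_of_notMem v hv, zero_smul],
      h.sum_smul_eq]

theorem support_subset (h : IsBarycentricCoords s w x) : support w ⊆ s :=
  fun v hv => by_contra fun hvs => hv (h.eq_zero_of_notMem v hvs)

theorem mem_convexHull_support (h : IsBarycentricCoords s w x) :
    x ∈ convexHull ℝ (support w) := by
  have := s.centerMass_mem_convexHull_support (fun v _ => h.nonneg v)
    (by rw [h.sum_eq_one]; exact one_pos) fun v _ => le_refl (w v)
  simpa only [Finset.centerMass_eq_of_sum_1 _ _ h.sum_eq_one, id, h.sum_smul_eq] using this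

end IsBarycentricCoords

end Barycentric

section Continuity

variable {E : Type*} [NormedAddCommGroup E] [NormedSpace ℝ E] [FiniteDimensional ℝ E]

theorem AffineIndependent.exists_continuous_eq_of_isBarycentricCoords {s : Finset E}
    (hs : AffineIndependent ℝ ((↑) : s → E)) (v : E) :
    ∃ c : E → ℝ, Continuous c ∧ ∀ {w x}, IsBarycentricCoords s w x → w v = c x := by
  classical
  by_cases hv : v ∈ s
  swap
  · exact ⟨0, continuous_const, fun h => h.eq_zero_of_notMem v hv⟩
  obtain ⟨t, hst, hti, htt⟩ := exists_subset_affineIndependent_affineSpan_eq_top hs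
  let B : AffineBasis t ℝ E := ⟨(↑), hti, by rw [Subtype.range_coe, htt]⟩
  refine ⟨B.coord ⟨v, hst hv⟩, continuous_barycentric_coord B _, fun {w x} h => ?_⟩
  have hsum : ∑ j ∈ s.subtype (· ∈ t), w j = 1 := by
    rw [Finset.sum_subtype_of_mem w fun u hu => hst hu, h.sum_eq_one]
  have hx : (s.subtype (· ∈ t)).affineCombination ℝ B (fun j => w j) = x := by
    rw [Finset.affineCombination_eq_linear_combination _ _ _ hsum, ← h.sum_smul_eq]
    exact Finset.sum_subtype_of_mem (fun u => w u • u) fun u hu => hst hu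
  rw [← hx, B.coord_apply_combination_of_mem (Finset.mem_subtype.2 hv) hsum]

theorem IsBarycentricCoords.eq_of_affineIndependent {s : Finset E} {w w' : E → ℝ} {x : E}
    (hs : AffineIndependent ℝ ((↑) : s → E)) (h : IsBarycentricCoords s w x)
    (h' : IsBarycentricCoords s w' x) : w = w' := by
  funext v
  obtain ⟨c, -, hc⟩ := hs.exists_continuous_eq_of_isBarycentricCoords v
  rw [hc h, hc h']

end Continuity

theorem ContinuousMap.homotopic_of_segment_subset {X E : Type*} [TopologicalSpace X]
    [AddCommGroup E] [TopologicalSpace E] [IsTopologicalAddGroup E] [Module ℝ E]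
    [ContinuousSMul ℝ E] {K : Set E} {f g : C(X, K)}
    (h : ∀ x, segment ℝ (f x : E) (g x) ⊆ K) : f.Homotopic g := by
  let H := Homotopy.affine (.comp ⟨Subtype.val, continuous_subtype_val⟩ f)
    (.comp ⟨Subtype.val, continuous_subtype_val⟩ g)
  have hH (p : unitInterval × X) : H p ∈ K :=
    h p.2 (by rw [← Path.range_segment]; exact ⟨p.1, rfl⟩)
  exact ⟨{ toFun := fun p => ⟨H p, hH p⟩
           continuous_toFun := H.continuous.subtype_mk _
           map_zero_left := fun x => Subtype.ext (H.apply_zero x)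
           map_one_left := fun x => Subtype.ext (H.apply_one x) }⟩

namespace Geometry.SimplicialComplex

variable {E : Type*} [NormedAddCommGroup E] [NormedSpace ℝ E] {K : SimplicialComplex ℝ E}
  {s t : Finset E} {x : E}

theorem finite_vertices (hfin : K.faces.Finite) : K.vertices.Finite :=
  K.vertices_eq ▸ hfin.biUnion fun s _ => s.finite_toSet

theorem isCompact_space (hfin : K.faces.Finite) : IsCompact K.space :=
  hfin.isCompact_biUnion fun s _ => s.finite_toSet.isCompact_convexHull ℝ

variable (K) in
/-- Junk outside `K.space`; on `K.space` it does not depend on the face chosen,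
by `eq_of_isBarycentricCoords`. -/
noncomputable def baryCoord (x : E) : E → ℝ :=
  Classical.epsilon fun w => ∃ s ∈ K.faces, IsBarycentricCoords s w x

variable [FiniteDimensional ℝ E]

variable (K) in
theorem eq_of_isBarycentricCoords {w w' : E → ℝ} (hs : s ∈ K.faces) (ht : t ∈ K.faces)
    (h : IsBarycentricCoords s w x) (h' : IsBarycentricCoords t w' x) : w = w' := by
  classical
  have hx : x ∈ convexHull ℝ ((s ∩ t : Finset E) : Set E) := by
    rw [Finset.coe_inter, ← K.convexHull_inter_convexHull hs ht]
    exact ⟨convexHull_mono h.support_subset h.mem_convexHull_support,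
      convexHull_mono h'.support_subset h'.mem_convexHull_support⟩
  have hst : s ∩ t ∈ K.faces :=
    K.down_closed hs Finset.inter_subset_left
      (Finset.coe_nonempty.1 (convexHull_nonempty_iff.1 ⟨x, hx⟩))
  obtain ⟨u, hu⟩ := Finset.exists_isBarycentricCoords_of_mem_convexHull hx
  rw [h.eq_of_affineIndependent (K.indep hs) (hu.mono Finset.inter_subset_left),
    h'.eq_of_affineIndependent (K.indep ht) (hu.mono Finset.inter_subset_right)]

theorem isBarycentricCoords_baryCoord (hs : s ∈ K.faces) (hx : x ∈ convexHull ℝ (s : Set E)) :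
    IsBarycentricCoords s (K.baryCoord x) x := by
  obtain ⟨w, hw⟩ := Finset.exists_isBarycentricCoords_of_mem_convexHull hx
  obtain ⟨t, ht, h⟩ := Classical.epsilon_spec (p := fun w => ∃ s ∈ K.faces,
    IsBarycentricCoords s w x) ⟨w, s, hs, hw⟩
  rwa [← K.eq_of_isBarycentricCoords ht hs h hw] at hw

theorem exists_isBarycentricCoords_baryCoord (hx : x ∈ K.space) :
    ∃ s ∈ K.faces, IsBarycentricCoords s (K.baryCoord x) x := by
  obtain ⟨s, hs, hxs⟩ := K.mem_space_iff.1 hx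
  exact ⟨s, hs, isBarycentricCoords_baryCoord hs hxs⟩

theorem baryCoord_nonneg (hx : x ∈ K.space) (v : E) : 0 ≤ K.baryCoord x v := by
  obtain ⟨s, -, h⟩ := exists_isBarycentricCoords_baryCoord hx
  exact h.nonneg v

theorem mem_convexHull_support_baryCoord (hx : x ∈ K.space) :
    x ∈ convexHull ℝ (support (K.baryCoord x)) := by
  obtain ⟨s, -, h⟩ := exists_isBarycentricCoords_baryCoord hx
  exact h.mem_convexHull_support

theorem exists_baryCoord_pos (hx : x ∈ K.space) : ∃ v, 0 < K.baryCoord x v := by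
  obtain ⟨v, hv⟩ := convexHull_nonempty_iff.1 ⟨x, mem_convexHull_support_baryCoord hx⟩
  exact ⟨v, (baryCoord_nonneg hx v).lt_of_ne' hv⟩

theorem convexHull_support_baryCoord_subset_space (hx : x ∈ K.space) :
    convexHull ℝ (support (K.baryCoord x)) ⊆ K.space := by
  obtain ⟨s, hs, h⟩ := exists_isBarycentricCoords_baryCoord hx
  exact (convexHull_mono h.support_subset).trans (K.convexHull_subset_space hs)

theorem support_baryCoord_subset_vertices (hx : x ∈ K.space) :
    support (K.baryCoord x) ⊆ K.vertices := by
  obtain ⟨s, hs, h⟩ := exists_isBarycentricCoords_baryCoord hx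
  exact fun v hv => K.vertices_eq ▸ mem_iUnion₂.2 ⟨s, hs, h.support_subset hv⟩

theorem continuousOn_baryCoord (hfin : K.faces.Finite) (v : E) :
    ContinuousOn (fun x => K.baryCoord x v) K.space := by
  have : Finite K.faces := hfin
  rw [space, biUnion_eq_iUnion]
  refine (locallyFinite_of_finite _).continuousOn_iUnion
    (fun s => (s.1.finite_toSet.isCompact_convexHull ℝ).isClosed) fun ⟨s, hs⟩ => ?_
  obtain ⟨c, hc, hcw⟩ := (K.indep hs).exists_continuous_eq_of_isBarycentricCoords v
  exact hc.continuousOn.congr fun x hx => hcw (isBarycentricCoords_baryCoord hs hx)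

theorem exists_pos_forall_dist_le_exists_baryCoord_pos (hfin : K.faces.Finite) :
    ∃ ε > 0, ∀ p q : K.space, dist p q ≤ ε →
      ∃ v, 0 < K.baryCoord p v ∧ 0 < K.baryCoord q v := by
  have : CompactSpace K.space := isCompact_iff_compactSpace.1 (isCompact_space hfin)
  let U (v : E) : Set K.space := {p | 0 < K.baryCoord p v}
  have hU : ∀ v, IsOpen (U v) := fun v =>
    isOpen_lt continuous_const (continuousOn_baryCoord hfin v).domRestrict
  have hcover : univ ⊆ ⋃ v, U v := fun p _ => mem_iUnion.2 (exists_baryCoord_pos p.2)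
  obtain ⟨δ, hδ, hball⟩ := lebesgue_number_lemma_of_metric isCompact_univ hU hcover
  refine ⟨δ / 2, half_pos hδ, fun p q hpq => ?_⟩
  obtain ⟨v, hv⟩ := hball p (mem_univ p)
  exact ⟨v, hv (mem_ball_self hδ), hv (mem_ball_comm.1 (hpq.trans_lt (half_lt_self hδ)))⟩

theorem segment_subset_space {x y : E} (hx : x ∈ K.space)
    (hy : y ∈ convexHull ℝ (support (K.baryCoord x))) : segment ℝ x y ⊆ K.space :=
  ((convex_convexHull ℝ _).segment_subset (mem_convexHull_support_baryCoord hx) hy).trans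
    (convexHull_support_baryCoord_subset_space hx)

theorem homotopic_of_forall_exists_baryCoord_pos (hfin : K.faces.Finite) {X : Type*}
    [TopologicalSpace X] {f g : C(X, K.space)}
    (hfg : ∀ x, ∃ v, 0 < K.baryCoord (f x) v ∧ 0 < K.baryCoord (g x) v) : f.Homotopic g := by
  obtain ⟨V, hV⟩ := (finite_vertices hfin).exists_finset_coe
  let c (x : X) (v : E) := min (K.baryCoord (f x) v) (K.baryCoord (g x) v)
  have hc_cont (v : E) : Continuous fun x => c x v :=
    have hb := continuousOn_baryCoord hfin v
    (hb.comp_continuous (continuous_subtype_val.comp f.continuous) fun x => (f x).2).min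
      (hb.comp_continuous (continuous_subtype_val.comp g.continuous) fun x => (g x).2)
  have hc₀ (x : X) (v : E) : 0 ≤ c x v :=
    le_min (baryCoord_nonneg (f x).2 v) (baryCoord_nonneg (g x).2 v)
  have hc_pos (x : X) : 0 < ∑ v ∈ V, c x v := by
    obtain ⟨v, hfv, hgv⟩ := hfg x
    have hvV : v ∈ V := by
      rw [← Finset.mem_coe, hV]
      exact support_baryCoord_subset_vertices (f x).2 hfv.ne'
    exact (lt_min hfv hgv).trans_le (Finset.single_le_sum (fun v _ => hc₀ x v) hvV)
  let m (x : X) : E := V.centerMass (c x) id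
  have hm_cont : Continuous m :=
    ((continuous_finsetSum V fun v _ => hc_cont v).inv₀ fun x => (hc_pos x).ne').smul
      (continuous_finsetSum V fun v _ => (hc_cont v).smul continuous_const)
  have hmf (x : X) : m x ∈ convexHull ℝ (support (K.baryCoord (f x))) :=
    V.centerMass_mem_convexHull_support (fun v _ => hc₀ x v) (hc_pos x)
      fun _ _ => min_le_left _ _
  have hmg (x : X) : m x ∈ convexHull ℝ (support (K.baryCoord (g x))) :=
    V.centerMass_mem_convexHull_support (fun v _ => hc₀ x v) (hc_pos x)
      fun _ _ => min_le_right _ _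
  let mK : C(X, K.space) :=
    ⟨fun x => ⟨m x, convexHull_support_baryCoord_subset_space (f x).2 (hmf x)⟩,
      hm_cont.subtype_mk _⟩
  have hf : f.Homotopic mK :=
    ContinuousMap.homotopic_of_segment_subset fun x => segment_subset_space (f x).2 (hmf x)
  have hg : g.Homotopic mK :=
    ContinuousMap.homotopic_of_segment_subset fun x => segment_subset_space (g x).2 (hmg x)
  exact hf.trans hg.symm

end Geometry.SimplicialComplex

/-- for the underlying space `K` of a finite geometric simplicial complex there is
`ε > 0` such that any two continuous maps into `K` that are pointwise `ε`-close are homotopic. -/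
theorem stmt12 (N : ℕ) (S : Geometry.SimplicialComplex ℝ (EuclideanSpace ℝ (Fin N)))
    (hfin : S.faces.Finite) :
    ∃ ε : ℝ, 0 < ε ∧
      ∀ (W : Type*) [TopologicalSpace W] (f g : C(W, ↥S.space)),
        (∀ w : W, dist (f w) (g w) ≤ ε) → f.Homotopic g := by
  obtain ⟨ε, hε, hclose⟩ := S.exists_pos_forall_dist_le_exists_baryCoord_pos hfin
  exact ⟨ε, hε, fun W _ f g hfg =>
    S.homotopic_of_forall_exists_baryCoord_pos hfin fun w => hclose _ _ (hfg w)⟩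
end
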